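/- arXiv:1903.06013 — 3 statements merged into one kernel-verified Lean document; each statement's English description precedes it below -/
import Mathlib

section
/- For all distinct points x, y in ℝ³, one has 1/|x-y| = (1/π) ∫₀^∞ ∫_{ℝ³} r^{-5} 𝟙_{|x-z|≤r} 𝟙_{|y-z|≤r} dz dr, where 𝟙_{|x-z|≤r} denotes the indicator function of the closed ball of radius r centered at x. -/
/-!
Move the centres by an isometry to `±(d/2) e₀`. If `d ≤ 2r`, the slice of the two balls at height
`t` along `e₀` is a disc of squared radius `r² - (|t| + d/2)²`, so by Cavalieri the lens has volume
`π/12 · (2r - d)² (4r + d)`; if `2r < d` the balls are disjoint. The remaining `r`-integral is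
elementary: `r⁻⁵ (2r - d)² (4r + d)` has the antiderivative `-(16 r⁻¹ - 6 d r⁻² + d³ r⁻⁴ / 4)`,
which vanishes at infinity and equals `-12/d` at `r = d/2`.
-/

open MeasureTheory Set Real Metric Filter Topology

theorem integral_indicator_one_mul_indicator_one {α : Type*} [MeasurableSpace α] {μ : Measure α}
    {s t : Set α} (hs : MeasurableSet s) (ht : MeasurableSet t) :
    ∫ z, s.indicator (fun _ => (1 : ℝ)) z * t.indicator (fun _ => (1 : ℝ)) z ∂μ =
      μ.real (s ∩ t) := by
  rw [← integral_indicator_one (hs.inter ht), inter_indicator_one]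
  rfl

theorem volume_closedBall_inter_closedBall_congr {E : Type*} [NormedAddCommGroup E]
    [InnerProductSpace ℝ E] [FiniteDimensional ℝ E] [MeasurableSpace E] [BorelSpace E]
    {x y x' y' : E} (h : dist x y = dist x' y') (r : ℝ) :
    volume (closedBall x r ∩ closedBall y r) = volume (closedBall x' r ∩ closedBall y' r) := by
  have hnorm : ‖y - x‖ = ‖y' - x'‖ := by
    rw [← dist_eq_norm, ← dist_eq_norm, dist_comm, h, dist_comm]
  let R := Submodule.reflection (ℝ ∙ ((y - x) - (y' - x')))ᗮ
  let f : E → E := fun z => R (z - x) + x'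
  have hf : MeasurePreserving f :=
    (measurePreserving_add_right volume x').comp
      (R.measurePreserving.comp (measurePreserving_sub_right volume x))
  have hf_iso : Isometry f :=
    (IsometryEquiv.addRight x').isometry.comp (R.isometry.comp (IsometryEquiv.subRight x).isometry)
  have hx : f x = x' := by simp [f]
  have hy : f y = y' := by simp only [f, R, Submodule.reflection_sub hnorm, sub_add_cancel]
  have hpre : f ⁻¹' (closedBall x' r ∩ closedBall y' r) = closedBall x r ∩ closedBall y r := by
    rw [preimage_inter, ← hx, ← hy, hf_iso.preimage_closedBall, hf_iso.preimage_closedBall]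
  rw [← hpre,
    hf.measure_preimage (measurableSet_closedBall.inter measurableSet_closedBall).nullMeasurableSet]

theorem volume_setOf_sq_add_sq_le (c : ℝ) :
    volume {w : Fin 2 → ℝ | w 0 ^ 2 + w 1 ^ 2 ≤ c} = ENNReal.ofReal (π * c) := by
  rcases lt_or_ge c 0 with hc | hc
  · have : {w : Fin 2 → ℝ | w 0 ^ 2 + w 1 ^ 2 ≤ c} = ∅ :=
      eq_empty_of_forall_notMem fun w hw => by nlinarith [hw.out, sq_nonneg (w 0), sq_nonneg (w 1)]
    rw [this, measure_empty, ENNReal.ofReal_of_nonpos (by nlinarith [pi_pos])]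
  · have : {w : Fin 2 → ℝ | w 0 ^ 2 + w 1 ^ 2 ≤ c} =
        WithLp.toLp 2 ⁻¹' closedBall (0 : EuclideanSpace ℝ (Fin 2)) √c := by
      ext w
      simp [EuclideanSpace.norm_eq, Fin.sum_univ_two, sqrt_le_sqrt_iff hc]
    rw [this, (PiLp.volume_preserving_toLp (Fin 2)).measure_preimage
      measurableSet_closedBall.nullMeasurableSet, EuclideanSpace.volume_closedBall_fin_two,
      ← ENNReal.ofReal_pow (sqrt_nonneg c), sq_sqrt hc, ← ENNReal.ofReal_mul hc, mul_comm]

theorem EuclideanSpace.volume_setOf_sq_add_sq_le_fin_three (g : ℝ → ℝ) (hg : Measurable g) :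
    volume {z : EuclideanSpace ℝ (Fin 3) | z 1 ^ 2 + z 2 ^ 2 ≤ g (z 0)} =
      ∫⁻ t, ENNReal.ofReal (π * g t) := by
  let B : Set (ℝ × (Fin 2 → ℝ)) := {p | p.2 0 ^ 2 + p.2 1 ^ 2 ≤ g p.1}
  have hB : MeasurableSet B := measurableSet_le (by fun_prop) (by fun_prop)
  have hS : WithLp.toLp 2 ⁻¹' {z : EuclideanSpace ℝ (Fin 3) | z 1 ^ 2 + z 2 ^ 2 ≤ g (z 0)} =
      MeasurableEquiv.piFinSuccAbove (fun _ : Fin 3 => ℝ) 0 ⁻¹' B := rfl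
  have hslice : MeasurePreserving (MeasurableEquiv.piFinSuccAbove (fun _ : Fin 3 => ℝ) 0) volume
      (volume : Measure (ℝ × (Fin 2 → ℝ))) :=
    measurePreserving_piFinSuccAbove _ 0
  rw [← (PiLp.volume_preserving_toLp (Fin 3)).measure_preimage
      (measurableSet_le (by fun_prop) (by fun_prop)).nullMeasurableSet, hS,
    hslice.measure_preimage hB.nullMeasurableSet, Measure.volume_eq_prod, Measure.prod_apply hB]
  exact lintegral_congr fun t => volume_setOf_sq_add_sq_le (g t)

theorem EuclideanSpace.closedBall_single_neg_inter_closedBall_single {a r : ℝ} (ha : 0 ≤ a)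
    (hr : 0 ≤ r) :
    closedBall (EuclideanSpace.single 0 (-a) : EuclideanSpace ℝ (Fin 3)) r ∩
        closedBall (EuclideanSpace.single 0 a) r =
      {z | z 1 ^ 2 + z 2 ^ 2 ≤ r ^ 2 - (|z 0| + a) ^ 2} := by
  ext z
  simp only [mem_inter_iff, mem_closedBall, EuclideanSpace.dist_eq, Fin.sum_univ_three,
    PiLp.single_apply, sqrt_le_iff, Real.dist_eq, sq_abs, mem_ofPred_eq]
  simp only [Fin.isValue, ↓reduceIte, Fin.reduceEq, sub_zero, hr, true_and]
  have hmax : (|z 0| + a) ^ 2 = max ((z 0 - -a) ^ 2) ((z 0 - a) ^ 2) := by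
    rcases abs_cases (z 0) with ⟨h, hz⟩ | ⟨h, hz⟩ <;> rw [h]
    · rw [max_eq_left (by nlinarith)]; ring
    · rw [max_eq_right (by nlinarith)]; ring
  rw [hmax, le_sub_iff_add_le', ← max_add_add_right, max_le_iff]
  constructor <;> rintro ⟨h₁, h₂⟩ <;> constructor <;> linarith

theorem integral_sq_sub_sq_abs_add {a r : ℝ} (har : a ≤ r) :
    ∫ t in -(r - a)..r - a, (r ^ 2 - (|t| + a) ^ 2) = 2 / 3 * (r - a) ^ 2 * (2 * r + a) := by
  have hsymm : ∫ t in -(r - a)..0, (r ^ 2 - (|t| + a) ^ 2) =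
      ∫ t in 0..r - a, (r ^ 2 - (|t| + a) ^ 2) := by
    simpa using (intervalIntegral.integral_comp_neg (a := 0) (b := r - a)
      (fun t => (r ^ 2 - (|t| + a) ^ 2))).symm
  have hpos : ∫ t in 0..r - a, (r ^ 2 - (|t| + a) ^ 2) = ∫ t in 0..r - a, (r ^ 2 - (t + a) ^ 2) :=
    intervalIntegral.integral_congr fun t ht => by
      rw [uIcc_of_le (by linarith)] at ht
      simp [abs_of_nonneg ht.1]
  have hint : ∀ u v : ℝ, IntervalIntegrable (fun t => r ^ 2 - (|t| + a) ^ 2) volume u v :=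
    fun _ _ => Continuous.intervalIntegrable (by fun_prop) _ _
  rw [← intervalIntegral.integral_add_adjacent_intervals (hint _ 0) (hint 0 _), hsymm, hpos,
    intervalIntegral.integral_comp_add_right (fun t => r ^ 2 - t ^ 2),
    intervalIntegral.integral_sub (by simp) (by simp)]
  simp
  ring

theorem lintegral_ofReal_pi_mul_sq_sub_sq_abs_add {a r : ℝ} (ha : 0 ≤ a) (har : a ≤ r) :
    ∫⁻ t, ENNReal.ofReal (π * (r ^ 2 - (|t| + a) ^ 2)) =
      ENNReal.ofReal (2 * π / 3 * (r - a) ^ 2 * (2 * r + a)) := by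
  have hsupp : (fun t => ENNReal.ofReal (π * (r ^ 2 - (|t| + a) ^ 2))).support ⊆
      Icc (-(r - a)) (r - a) := by
    intro t ht
    rw [Function.mem_support, ne_eq, ENNReal.ofReal_eq_zero, not_le] at ht
    have hsq : (|t| + a) ^ 2 < r ^ 2 := by nlinarith [pi_pos]
    have : |t| + a < r := lt_of_pow_lt_pow_left₀ 2 (by linarith) hsq
    exact abs_le.1 (by linarith)
  have hnonneg : ∀ t ∈ Icc (-(r - a)) (r - a), 0 ≤ π * (r ^ 2 - (|t| + a) ^ 2) := by
    intro t ht
    have : |t| ≤ r - a := abs_le.2 ht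
    have : 0 ≤ |t| := abs_nonneg t
    have : 0 ≤ r ^ 2 - (|t| + a) ^ 2 := by nlinarith
    positivity
  rw [← setLIntegral_eq_of_support_subset hsupp, ← ofReal_integral_eq_lintegral_ofReal
      (Continuous.integrableOn_Icc (by fun_prop))
      ((ae_restrict_iff' measurableSet_Icc).2 (.of_forall hnonneg)),
    integral_Icc_eq_integral_Ioc, ← intervalIntegral.integral_of_le (by linarith),
    intervalIntegral.integral_const_mul, integral_sq_sub_sq_abs_add har]
  ring_nf

theorem EuclideanSpace.volume_closedBall_inter_closedBall (x y : EuclideanSpace ℝ (Fin 3))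
    {r : ℝ} (h : dist x y ≤ 2 * r) :
    volume (closedBall x r ∩ closedBall y r) =
      ENNReal.ofReal (π / 12 * (2 * r - dist x y) ^ 2 * (4 * r + dist x y)) := by
  have hr : 0 ≤ r := by linarith [dist_nonneg (x := x) (y := y)]
  set a := dist x y / 2 with ha_def
  have ha : 0 ≤ a := by positivity
  have hdist : dist x y = dist (EuclideanSpace.single 0 (-a) : EuclideanSpace ℝ (Fin 3))
      (EuclideanSpace.single 0 a) := by
    rw [PiLp.dist_single_same, Real.dist_eq, abs_of_nonpos (by linarith)]
    ring
  rw [volume_closedBall_inter_closedBall_congr hdist,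
    EuclideanSpace.closedBall_single_neg_inter_closedBall_single ha hr,
    volume_setOf_sq_add_sq_le_fin_three (fun t => r ^ 2 - (|t| + a) ^ 2) (by fun_prop),
    lintegral_ofReal_pi_mul_sq_sub_sq_abs_add ha (by linarith), ha_def]
  ring_nf

noncomputable def lensVolume (d r : ℝ) : ℝ :=
  if d ≤ 2 * r then π / 12 * (2 * r - d) ^ 2 * (4 * r + d) else 0

theorem EuclideanSpace.measureReal_closedBall_inter_closedBall (x y : EuclideanSpace ℝ (Fin 3))
    (r : ℝ) : volume.real (closedBall x r ∩ closedBall y r) = lensVolume (dist x y) r := by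
  unfold lensVolume
  split_ifs with h
  · rw [measureReal_def, volume_closedBall_inter_closedBall x y h, ENNReal.toReal_ofReal]
    exact mul_nonneg (by positivity) (by linarith [dist_nonneg (x := x) (y := y)])
  · have : closedBall x r ∩ closedBall y r = ∅ :=
      eq_empty_of_forall_notMem fun z ⟨hx, hy⟩ => h <| by
        linarith [dist_triangle x z y, mem_closedBall'.1 hx, mem_closedBall.1 hy]
    rw [this, measureReal_empty]

theorem integral_Ioi_zpow_neg_five_mul_lensVolume {d : ℝ} (hd : 0 < d) :
    ∫ r in Ioi 0, r ^ (-5 : ℤ) * lensVolume d r = π / d := by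
  have hvanish : ∀ r ∈ Ioi 0 \ Ioi (d / 2), r ^ (-5 : ℤ) * lensVolume d r = 0 := by
    rintro r ⟨-, hr⟩
    rcases (notMem_Ioi.1 hr).lt_or_eq with hlt | rfl
    · simp [lensVolume, show ¬d ≤ 2 * r by linarith]
    · simp [lensVolume, mul_div_cancel₀ d two_ne_zero]
  have hformula : EqOn (fun r => r ^ (-5 : ℤ) * lensVolume d r)
      (fun r => r ^ (-5 : ℤ) * (π / 12 * (2 * r - d) ^ 2 * (4 * r + d))) (Ioi (d / 2)) :=
    fun r hr => by simp [lensVolume, show d ≤ 2 * r by linarith [mem_Ioi.1 hr]]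
  let G : ℝ → ℝ := fun r => -(π / 12) * (16 * r⁻¹ - 6 * d * r⁻¹ ^ 2 + d ^ 3 / 4 * r⁻¹ ^ 4)
  have hG_deriv : ∀ r ∈ Ici (d / 2),
      HasDerivAt G (r ^ (-5 : ℤ) * (π / 12 * (2 * r - d) ^ 2 * (4 * r + d))) r := by
    intro r hr
    have hinv := hasDerivAt_inv (show r ≠ 0 by linarith [mem_Ici.1 hr])
    refine ((((hinv.const_mul 16).sub ((hinv.pow 2).const_mul (6 * d))).add
      ((hinv.pow 4).const_mul (d ^ 3 / 4))).const_mul (-(π / 12))).congr_deriv ?_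
    norm_num [zpow_neg, zpow_ofNat]
    field_simp
    ring
  have hG_nonneg : ∀ r ∈ Ioi (d / 2),
      0 ≤ r ^ (-5 : ℤ) * (π / 12 * (2 * r - d) ^ 2 * (4 * r + d)) := fun r hr =>
    mul_nonneg (zpow_nonneg (by linarith [mem_Ioi.1 hr]) _)
      (mul_nonneg (by positivity) (by linarith [mem_Ioi.1 hr]))
  have hG_lim : Tendsto G atTop (𝓝 0) := by
    have hp : Continuous fun s : ℝ => -(π / 12) * (16 * s - 6 * d * s ^ 2 + d ^ 3 / 4 * s ^ 4) := by
      fun_prop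
    simpa [G, Function.comp_def] using (hp.tendsto 0).comp tendsto_inv_atTop_zero
  rw [setIntegral_eq_of_subset_of_forall_sdiff_eq_zero measurableSet_Ioi
      (Ioi_subset_Ioi (by positivity)) hvanish, setIntegral_congr_fun measurableSet_Ioi hformula,
    integral_Ioi_of_hasDerivAt_of_nonneg' hG_deriv hG_nonneg hG_lim]
  simp only [G]
  field_simp
  ring

/-- Fefferman–de la Llave representation of the Coulomb potential. -/
theorem stmt0 (x y : EuclideanSpace ℝ (Fin 3)) (hxy : x ≠ y) :
    1 / ‖x - y‖ =
      (1 / Real.pi) *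
        ∫ r in Set.Ioi (0 : ℝ), ∫ z : EuclideanSpace ℝ (Fin 3),
          r ^ (-5 : ℤ) * (Metric.closedBall x r).indicator (fun _ => (1 : ℝ)) z *
            (Metric.closedBall y r).indicator (fun _ => (1 : ℝ)) z := by
  have hinner : ∀ r : ℝ, ∫ z : EuclideanSpace ℝ (Fin 3),
      r ^ (-5 : ℤ) * (closedBall x r).indicator (fun _ => (1 : ℝ)) z *
        (closedBall y r).indicator (fun _ => (1 : ℝ)) z =
      r ^ (-5 : ℤ) * lensVolume (dist x y) r := by
    intro r
    simp_rw [mul_assoc]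
    rw [integral_const_mul, integral_indicator_one_mul_indicator_one measurableSet_closedBall
      measurableSet_closedBall, EuclideanSpace.measureReal_closedBall_inter_closedBall]
  simp_rw [hinner]
  rw [integral_Ioi_zpow_neg_five_mul_lensVolume (dist_pos.2 hxy), dist_eq_norm]
  field_simp
end

section
/- For all distinct x, y in ℝ³, one has 1/|x-y| = (4/π²) ∫₀^∞ ∫_{ℝ³} r^{-5} exp(-|x-z|²/r²) exp(-|y-z|²/r²) dz dr. -/
/-!
Completing the square (Apollonius' theorem) turns the product of the two Gaussians centred at
`x` and `y` into `exp (-|x - y|² / 2r²)` times a Gaussian centred at the midpoint, whose integral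
over `ℝ³` is `(π r² / 2)^{3/2}`. What remains is `∫₀^∞ r⁻² exp (-|x - y|² / 2r²) dr`, which the
substitution `r ↦ 1/r` turns into a half-line Gaussian integral equal to `√(π/2) / |x - y|`.
-/

open MeasureTheory Real Set

section InnerProductSpace

variable {V : Type*} [NormedAddCommGroup V] [InnerProductSpace ℝ V]

theorem exp_neg_norm_sub_sq_div_mul_exp (x y z : V) (s : ℝ) :
    exp (-‖x - z‖ ^ 2 / s) * exp (-‖y - z‖ ^ 2 / s) =
      exp (-(‖x - y‖ ^ 2 / 2) / s) * exp (-(2 / s) * ‖z - midpoint ℝ x y‖ ^ 2) := by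
  have apollonius :=
    EuclideanGeometry.dist_sq_add_dist_sq_eq_two_mul_dist_midpoint_sq_add_half_dist_sq z x y
  simp only [dist_eq_norm, norm_sub_rev z x, norm_sub_rev z y] at apollonius
  rw [← exp_add, ← exp_add]
  congr 1
  linear_combination (-1 / s) * apollonius

variable [FiniteDimensional ℝ V] [MeasurableSpace V] [BorelSpace V]

theorem integral_exp_neg_mul_norm_sub_sq {b : ℝ} (hb : 0 < b) (m : V) :
    ∫ z : V, exp (-b * ‖z - m‖ ^ 2) = √(π / b) ^ Module.finrank ℝ V := by
  rw [integral_sub_right_eq_self (fun z ↦ exp (-b * ‖z‖ ^ 2)) m,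
    GaussianFourier.integral_rexp_neg_mul_sq_norm hb, rpow_div_two_eq_sqrt _ (by positivity),
    rpow_natCast]

theorem integral_exp_neg_norm_sub_sq_div_mul_exp {s : ℝ} (hs : 0 < s) (x y : V) :
    ∫ z : V, exp (-‖x - z‖ ^ 2 / s) * exp (-‖y - z‖ ^ 2 / s) =
      exp (-(‖x - y‖ ^ 2 / 2) / s) * √(π * s / 2) ^ Module.finrank ℝ V := by
  simp_rw [exp_neg_norm_sub_sq_div_mul_exp x y _ s]
  rw [integral_const_mul, integral_exp_neg_mul_norm_sub_sq (by positivity)]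
  congr 3
  field_simp

end InnerProductSpace

theorem integral_Ioi_zpow_neg_two_mul_exp_neg_div_sq (a : ℝ) :
    ∫ r in Ioi 0, r ^ (-2 : ℤ) * exp (-a / r ^ 2) = √(π / a) / 2 := by
  rw [← integral_gaussian_Ioi, ← integral_comp_rpow_Ioi _ (p := -1) (by norm_num)]
  refine setIntegral_congr_fun measurableSet_Ioi fun r hr ↦ ?_
  have hr : r ≠ 0 := (mem_Ioi.1 hr).ne'
  norm_num [rpow_neg_one, hr]

/-- Smooth (Gaussian) Fefferman–de la Llave representation of the Coulomb potential. -/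
theorem stmt1 (x y : EuclideanSpace ℝ (Fin 3)) (hxy : x ≠ y) :
    1 / ‖x - y‖ =
      (4 / Real.pi ^ 2) *
        ∫ r in Set.Ioi (0 : ℝ), ∫ z : EuclideanSpace ℝ (Fin 3),
          r ^ (-5 : ℤ) * Real.exp (-‖x - z‖ ^ 2 / r ^ 2) * Real.exp (-‖y - z‖ ^ 2 / r ^ 2) := by
  have hd : 0 < ‖x - y‖ := norm_pos_iff.2 (sub_ne_zero.2 hxy)
  have hsq : √(π / 2) ^ 2 = π / 2 := sq_sqrt (by positivity)
  have inner : ∀ r ∈ Ioi (0 : ℝ), ∫ z : EuclideanSpace ℝ (Fin 3),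
      r ^ (-5 : ℤ) * exp (-‖x - z‖ ^ 2 / r ^ 2) * exp (-‖y - z‖ ^ 2 / r ^ 2) =
        √(π / 2) ^ 3 * (r ^ (-2 : ℤ) * exp (-(‖x - y‖ ^ 2 / 2) / r ^ 2)) := by
    intro r (hr : 0 < r)
    simp_rw [mul_assoc, integral_const_mul]
    rw [integral_exp_neg_norm_sub_sq_div_mul_exp (by positivity), finrank_euclideanSpace_fin,
      show π * r ^ 2 / 2 = r ^ 2 * (π / 2) by ring, sqrt_mul (by positivity), sqrt_sq hr.le]
    have hpow : r ^ (-5 : ℤ) * r ^ 3 = r ^ (-2 : ℤ) := by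
      rw [← zpow_natCast, ← zpow_add₀ hr.ne']
      norm_num
    rw [mul_pow, ← hpow]
    ring
  rw [setIntegral_congr_fun measurableSet_Ioi inner, integral_const_mul,
    integral_Ioi_zpow_neg_two_mul_exp_neg_div_sq,
    show π / (‖x - y‖ ^ 2 / 2) = (2 / ‖x - y‖) ^ 2 * (π / 2) by field_simp,
    sqrt_mul (by positivity), sqrt_sq (by positivity)]
  field_simp
  linear_combination -4 * (√(π / 2) ^ 2 + π / 2) * hsq
end

section
/- Let A be a trace class self-adjoint operator on L²(ℝ³) with spectral decomposition A = ∑_k α_k |f_k⟩⟨f_k|, and set ρ(x) = ∑_k |α_k| |f_k(x)|². For r > 0 and z ∈ ℝ³, let χ be the multiplication operator by x ↦ exp(-|x-z|²/r²). Then ∑_k |α_k| ‖χ f_k‖²_{L²} = ∫₀¹ ∫_{B(z, r√(log(1/t))/√2)} ρ(x) dx dt ≤ C r³ ρ*(z), where ρ* is the Hardy–Littlewood maximal function of ρ and C > 0 is a universal constant. -/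
/-!
Put `w(x) = exp(-|x-z|²/r²)²`. Since `‖f_k‖₂ = 1` and `∑ |α_k| < ∞`, the series can be summed
under the integral: the left side is `∫ w ρ`. The layer-cake formula for the finite measure
`ρ dx` turns this into `∫₀¹ ∫_{w > t} ρ dt`, and `{w > t}` is the ball of radius
`r √(log (1/t)) / √2`. Each slice is at most the volume of that ball times `ρ*(z)`, that is
`≲ r³ log (1/t)^{3/2} ρ*(z)`, and `log (1/t)^{3/2}` is integrable on `(0, 1]` because
`log (1/t) = O(t^{-ε})` for every `ε > 0`.
-/

open MeasureTheory ComplexConjugate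

/-- The Hardy–Littlewood maximal function of (the absolute value of) `ρ`, as a supremum
over all closed balls containing the point. -/
noncomputable def maxFn (ρ : EuclideanSpace ℝ (Fin 3) → ℝ) (z : EuclideanSpace ℝ (Fin 3)) :
    ENNReal :=
  ⨆ (c : EuclideanSpace ℝ (Fin 3)) (R : ℝ) (_ : 0 < R) (_ : z ∈ Metric.closedBall c R),
    (volume (Metric.closedBall c R))⁻¹ *
      ∫⁻ x in Metric.closedBall c R, ENNReal.ofReal |ρ x|

open Set
open scoped ENNReal

section Series

variable {X E : Type*} [MeasurableSpace X] {μ : Measure X} [NormedAddCommGroup E]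

theorem integrable_tsum_of_summable_integral_norm [CompleteSpace E] {ι : Type*} [Countable ι]
    {F : ι → X → E}
    (hF_int : ∀ k, Integrable (F k) μ) (hF_sum : Summable fun k => ∫ x, ‖F k x‖ ∂μ) :
    Integrable (fun x => ∑' k, F k x) μ := by
  refine ⟨.tsum fun k => (hF_int k).1, ?_⟩
  have h_enorm : ∀ k, ∫⁻ x, ‖F k x‖ₑ ∂μ = ENNReal.ofReal (∫ x, ‖F k x‖ ∂μ) := fun k => by
    rw [ofReal_integral_eq_lintegral_ofReal (hF_int k).norm (ae_of_all _ fun _ => norm_nonneg _)]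
    simp only [ofReal_norm]
  calc ∫⁻ x, ‖∑' k, F k x‖ₑ ∂μ ≤ ∫⁻ x, ∑' k, ‖F k x‖ₑ ∂μ :=
        lintegral_mono fun _ => enorm_tsum_le_tsum_enorm
    _ = ENNReal.ofReal (∑' k, ∫ x, ‖F k x‖ ∂μ) := by
        rw [lintegral_tsum fun k => (hF_int k).1.enorm, ENNReal.ofReal_tsum_of_nonneg
          (fun k => integral_nonneg fun _ => norm_nonneg _) hF_sum]
        simp only [h_enorm]
    _ < ∞ := ENNReal.ofReal_lt_top

theorem integral_conj_mul_self (f : X → ℂ) :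
    ∫ x, conj (f x) * f x ∂μ = ((∫ x, ‖f x‖ ^ 2 ∂μ : ℝ) : ℂ) := by
  simp_rw [Complex.conj_mul']
  exact_mod_cast integral_ofReal (𝕜 := ℂ)

theorem integrable_mul_norm_sq {f : X → E} {w : X → ℝ} (hf : MemLp f 2 μ)
    (hw : AEStronglyMeasurable w μ) (hw1 : ∀ x, |w x| ≤ 1) :
    Integrable (fun x => w x * ‖f x‖ ^ 2) μ :=
  hf.norm.integrable_sq.bdd_mul hw (ae_of_all _ hw1)

variable {c : ℕ → ℝ} {f : ℕ → X → E} {w : X → ℝ}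

theorem summable_integral_norm_mul_norm_sq (hc : Summable c) (hf : ∀ k, MemLp (f k) 2 μ)
    (hnorm : ∀ k, ∫ x, ‖f k x‖ ^ 2 ∂μ = 1) (hw : AEStronglyMeasurable w μ)
    (hw1 : ∀ x, |w x| ≤ 1) :
    Summable fun k => ∫ x, ‖c k * (w x * ‖f k x‖ ^ 2)‖ ∂μ := by
  refine .of_nonneg_of_le (fun k => integral_nonneg fun _ => norm_nonneg _) (fun k => ?_)
    (summable_abs_iff.2 hc)
  have h_int : Integrable (fun x => |w x| * ‖f k x‖ ^ 2) μ :=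
    integrable_mul_norm_sq (hf k) hw.norm (by simpa using hw1)
  calc ∫ x, ‖c k * (w x * ‖f k x‖ ^ 2)‖ ∂μ = |c k| * ∫ x, |w x| * ‖f k x‖ ^ 2 ∂μ := by
        rw [← integral_const_mul]
        simp only [norm_mul, norm_pow, Real.norm_eq_abs, abs_norm]
    _ ≤ |c k| * ∫ x, ‖f k x‖ ^ 2 ∂μ :=
        mul_le_mul_of_nonneg_left (integral_mono h_int (hf k).norm.integrable_sq
          fun x => mul_le_of_le_one_left (sq_nonneg _) (hw1 x)) (abs_nonneg _)
    _ = |c k| := by rw [hnorm, mul_one]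

theorem integrable_tsum_mul_norm_sq (hc : Summable c) (hf : ∀ k, MemLp (f k) 2 μ)
    (hnorm : ∀ k, ∫ x, ‖f k x‖ ^ 2 ∂μ = 1) :
    Integrable (fun x => ∑' k, c k * ‖f k x‖ ^ 2) μ := by
  have h := summable_integral_norm_mul_norm_sq (w := 1) hc hf hnorm
    aestronglyMeasurable_const (by simp)
  simp only [Pi.one_apply, one_mul] at h
  exact integrable_tsum_of_summable_integral_norm
    (fun k => ((hf k).norm.integrable_sq).const_mul _) h

theorem tsum_mul_integral_mul_norm_sq (hc : Summable c) (hf : ∀ k, MemLp (f k) 2 μ)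
    (hnorm : ∀ k, ∫ x, ‖f k x‖ ^ 2 ∂μ = 1) (hw : AEStronglyMeasurable w μ)
    (hw1 : ∀ x, |w x| ≤ 1) :
    ∑' k, c k * ∫ x, w x * ‖f k x‖ ^ 2 ∂μ = ∫ x, w x * ∑' k, c k * ‖f k x‖ ^ 2 ∂μ := by
  simp_rw [← integral_const_mul]
  rw [integral_tsum_of_summable_integral_norm
    (fun k => (integrable_mul_norm_sq (hf k) hw hw1).const_mul _)
    (summable_integral_norm_mul_norm_sq hc hf hnorm hw hw1)]
  simp_rw [← tsum_mul_left, mul_left_comm]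

end Series

section LayerCake

variable {X : Type*} [MeasurableSpace X] {μ : Measure X}

theorem integral_mul_eq_intervalIntegral_setIntegral_lt {ρ w : X → ℝ} (hρ : Integrable ρ μ)
    (hρ0 : 0 ≤ᵐ[μ] ρ) (hw : Measurable w) (hw0 : ∀ x, 0 ≤ w x) (hw1 : ∀ x, w x ≤ 1) :
    ∫ x, w x * ρ x ∂μ = ∫ t in (0 : ℝ)..1, ∫ x in {x | t < w x}, ρ x ∂μ := by
  set ν := μ.withDensity fun x => ENNReal.ofReal (ρ x)
  have : IsFiniteMeasure ν := isFiniteMeasure_withDensity_ofReal hρ.2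
  have h_density : ∫ x, w x * ρ x ∂μ = ∫ x, w x ∂ν := by
    rw [integral_withDensity_eq_integral_toReal_smul₀ hρ.1.aemeasurable.ennreal_ofReal
      (ae_of_all _ fun _ => ENNReal.ofReal_lt_top)]
    refine integral_congr_ae (hρ0.mono fun x hx => ?_)
    simp only [ENNReal.toReal_ofReal hx, smul_eq_mul, mul_comm]
  have h_empty : ∀ t, 1 ≤ t → {x | t < w x} = ∅ := fun t ht =>
    eq_empty_of_forall_notMem fun x hx => (hw1 x).not_gt (ht.trans_lt hx)
  have hw_int : Integrable w ν := .of_bound hw.aestronglyMeasurable 1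
    (ae_of_all _ fun x => (Real.norm_of_nonneg (hw0 x)).trans_le (hw1 x))
  rw [h_density, hw_int.integral_eq_integral_meas_lt (ae_of_all _ hw0),
    intervalIntegral.integral_of_le zero_le_one,
    setIntegral_eq_of_subset_of_forall_sdiff_eq_zero measurableSet_Ioi Ioc_subset_Ioi_self
      fun t ht => by simp [h_empty t (not_le.1 fun h => ht.2 ⟨ht.1, h⟩).le]]
  refine setIntegral_congr_fun measurableSet_Ioc fun t _ => ?_
  rw [measureReal_def, withDensity_apply _ (measurableSet_lt measurable_const hw),
    integral_eq_lintegral_of_nonneg_ae (ae_restrict_of_ae hρ0) hρ.1.restrict]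

end LayerCake

theorem setOf_lt_exp_sq_eq_ball {E : Type*} [SeminormedAddCommGroup E] (z : E) {r t : ℝ}
    (hr : 0 < r) (ht0 : 0 < t) (ht1 : t ≤ 1) :
    {x | t < Real.exp (-‖x - z‖ ^ 2 / r ^ 2) ^ 2} =
      Metric.ball z (r * Real.sqrt (Real.log (1 / t)) / Real.sqrt 2) := by
  have hlog : 0 ≤ Real.log (1 / t) := Real.log_nonneg (one_le_one_div ht0 ht1)
  have h_radius_sq : (r * Real.sqrt (Real.log (1 / t)) / Real.sqrt 2) ^ 2
      = r ^ 2 * Real.log (1 / t) / 2 := by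
    rw [div_pow, mul_pow, Real.sq_sqrt hlog, Real.sq_sqrt zero_le_two]
  ext x
  rw [mem_ofPred_eq, Metric.mem_ball, dist_eq_norm, ← Real.exp_nat_mul,
    ← Real.log_lt_iff_lt_exp ht0, ← sq_lt_sq₀ (norm_nonneg _) (by positivity), h_radius_sq,
    one_div, Real.log_inv, show ((2 : ℕ) : ℝ) * (-‖x - z‖ ^ 2 / r ^ 2) = -(2 * ‖x - z‖ ^ 2) / r ^ 2
      by push_cast; ring, lt_div_iff₀ (by positivity), lt_div_iff₀ two_pos]
  constructor <;> intro h <;> linarith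

theorem exp_neg_sq_div_sq_sq_le_one {E : Type*} [SeminormedAddCommGroup E] (x z : E) (r : ℝ) :
    Real.exp (-‖x - z‖ ^ 2 / r ^ 2) ^ 2 ≤ 1 :=
  pow_le_one₀ (Real.exp_nonneg _) <| Real.exp_le_one_iff.2 <|
    div_nonpos_of_nonpos_of_nonneg (neg_nonpos.2 (sq_nonneg _)) (sq_nonneg r)

theorem tsum_mul_integral_exp_sq_eq_intervalIntegral {E F : Type*} [NormedAddCommGroup E]
    [MeasurableSpace E] [OpensMeasurableSpace E] {μ : Measure E} [NormedAddCommGroup F]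
    {c : ℕ → ℝ} (hc0 : ∀ k, 0 ≤ c k) (hc : Summable c) {f : ℕ → E → F}
    (hf : ∀ k, MemLp (f k) 2 μ) (hnorm : ∀ k, ∫ x, ‖f k x‖ ^ 2 ∂μ = 1) {r : ℝ} (hr : 0 < r)
    (z : E) :
    ∑' k, c k * ∫ x, Real.exp (-‖x - z‖ ^ 2 / r ^ 2) ^ 2 * ‖f k x‖ ^ 2 ∂μ =
      ∫ t in (0 : ℝ)..1, ∫ x in Metric.ball z (r * Real.sqrt (Real.log (1 / t)) / Real.sqrt 2),
        ∑' k, c k * ‖f k x‖ ^ 2 ∂μ := by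
  have hw : Continuous fun x : E => Real.exp (-‖x - z‖ ^ 2 / r ^ 2) ^ 2 := by fun_prop
  have hw0 : ∀ x : E, 0 ≤ Real.exp (-‖x - z‖ ^ 2 / r ^ 2) ^ 2 := fun _ => sq_nonneg _
  rw [tsum_mul_integral_mul_norm_sq hc hf hnorm hw.aestronglyMeasurable
      fun x => (abs_of_nonneg (hw0 x)).trans_le (exp_neg_sq_div_sq_sq_le_one x z r),
    integral_mul_eq_intervalIntegral_setIntegral_lt (integrable_tsum_mul_norm_sq hc hf hnorm)
      (ae_of_all _ fun x => tsum_nonneg fun k => mul_nonneg (hc0 k) (sq_nonneg _))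
      hw.measurable hw0 fun x => exp_neg_sq_div_sq_sq_le_one x z r]
  refine intervalIntegral.integral_congr_ae (ae_of_all _ fun t ⟨ht0, ht1⟩ => ?_)
  simp only [min_eq_left zero_le_one, max_eq_right zero_le_one] at ht0 ht1
  rw [setOf_lt_exp_sq_eq_ball z hr ht0 ht1]

theorem integrableOn_log_inv_rpow {p : ℝ} (hp : 0 ≤ p) :
    IntegrableOn (fun t => Real.log (1 / t) ^ p) (Ioc 0 1) := by
  have hε : 0 < 1 / (p + 1) := by positivity
  have h_dom : IntegrableOn (fun t : ℝ => (p + 1) ^ p * t ^ (-(p / (p + 1)))) (Ioc 0 1) := by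
    refine Integrable.const_mul (f := fun t : ℝ => t ^ (-(p / (p + 1)))) ?_ _
    rw [← IntegrableOn, ← intervalIntegrable_iff_integrableOn_Ioc_of_le zero_le_one]
    refine intervalIntegral.intervalIntegrable_rpow' ?_
    rw [neg_lt_neg_iff, div_lt_one (by positivity)]
    linarith
  refine h_dom.mono' (Measurable.aestronglyMeasurable (by fun_prop))
    ((ae_restrict_iff' measurableSet_Ioc).2 (ae_of_all _ ?_))
  rintro t ⟨ht0, ht1⟩
  have hlog : 0 ≤ Real.log (1 / t) := Real.log_nonneg (one_le_one_div ht0 ht1)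
  -- `log s ≤ s ^ ε / ε` with `ε = 1 / (p + 1)`, so that `ε * p < 1`
  have h_bound : Real.log (1 / t) ≤ (p + 1) * t ^ (-(1 / (p + 1))) := by
    have := Real.log_le_rpow_div (one_div_pos.2 ht0).le hε
    rwa [Real.div_rpow zero_le_one ht0.le, Real.one_rpow,
      div_div_div_cancel_left' _ _ one_ne_zero, div_eq_mul_inv (p + 1), ← Real.rpow_neg ht0.le]
      at this
  rw [Real.norm_of_nonneg (Real.rpow_nonneg hlog _)]
  calc Real.log (1 / t) ^ p ≤ ((p + 1) * t ^ (-(1 / (p + 1)))) ^ p :=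
        Real.rpow_le_rpow hlog h_bound hp
    _ = (p + 1) ^ p * t ^ (-(p / (p + 1))) := by
        rw [Real.mul_rpow (by positivity) (by positivity), ← Real.rpow_mul ht0.le]
        congr 2
        ring

theorem enorm_setIntegral_ball_le_maxFn (ρ : EuclideanSpace ℝ (Fin 3) → ℝ)
    (z : EuclideanSpace ℝ (Fin 3)) (R : ℝ) :
    ‖∫ x in Metric.ball z R, ρ x‖ₑ ≤ volume (Metric.closedBall z R) * maxFn ρ z := by
  rcases le_or_gt R 0 with hR | hR
  · simp [Metric.ball_eq_empty.2 hR]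
  have h_vol_ne_zero : volume (Metric.closedBall z R) ≠ 0 :=
    (Metric.measure_closedBall_pos volume z hR).ne'
  have h_avg : (volume (Metric.closedBall z R))⁻¹ *
      ∫⁻ x in Metric.closedBall z R, ENNReal.ofReal |ρ x| ≤ maxFn ρ z :=
    le_iSup_of_le z <| le_iSup_of_le R <| le_iSup_of_le hR <|
      le_iSup_of_le (Metric.mem_closedBall_self hR.le) le_rfl
  calc ‖∫ x in Metric.ball z R, ρ x‖ₑ ≤ ∫⁻ x in Metric.ball z R, ‖ρ x‖ₑ :=
        enorm_integral_le_lintegral_enorm _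
    _ ≤ ∫⁻ x in Metric.closedBall z R, ENNReal.ofReal |ρ x| := by
        simp only [Real.enorm_eq_ofReal_abs]
        exact lintegral_mono_set Metric.ball_subset_closedBall
    _ = volume (Metric.closedBall z R) * ((volume (Metric.closedBall z R))⁻¹ *
          ∫⁻ x in Metric.closedBall z R, ENNReal.ofReal |ρ x|) := by
        rw [← mul_assoc, ENNReal.mul_inv_cancel h_vol_ne_zero measure_closedBall_lt_top.ne,
          one_mul]
    _ ≤ volume (Metric.closedBall z R) * maxFn ρ z := by gcongr

noncomputable def gaussianMaxConst : ℝ≥0∞ :=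
  volume (Metric.ball (0 : EuclideanSpace ℝ (Fin 3)) 1) *
    ∫⁻ t in Ioc 0 1, ENNReal.ofReal (Real.log (1 / t) ^ (3 / 2 : ℝ))

theorem gaussianMaxConst_ne_top : gaussianMaxConst ≠ ∞ :=
  ENNReal.mul_ne_top measure_ball_lt_top.ne
    (integrableOn_log_inv_rpow (by norm_num)).lintegral_lt_top.ne

theorem enorm_setIntegral_ball_sqrt_log_le (ρ : EuclideanSpace ℝ (Fin 3) → ℝ)
    (z : EuclideanSpace ℝ (Fin 3)) {r t : ℝ} (hr : 0 < r) (ht0 : 0 < t) (ht1 : t ≤ 1) :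
    ‖∫ x in Metric.ball z (r * Real.sqrt (Real.log (1 / t)) / Real.sqrt 2), ρ x‖ₑ ≤
      ENNReal.ofReal (Real.log (1 / t) ^ (3 / 2 : ℝ)) *
        (volume (Metric.ball (0 : EuclideanSpace ℝ (Fin 3)) 1) *
          (ENNReal.ofReal (r ^ 3) * maxFn ρ z)) := by
  have hlog : 0 ≤ Real.log (1 / t) := Real.log_nonneg (one_le_one_div ht0 ht1)
  set R := r * Real.sqrt (Real.log (1 / t)) / Real.sqrt 2
  have hR : 0 ≤ R := by positivity
  have h_cube : R ^ 3 ≤ Real.log (1 / t) ^ (3 / 2 : ℝ) * r ^ 3 := by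
    have hR_le : R ≤ r * Real.sqrt (Real.log (1 / t)) :=
      div_le_self (by positivity) (Real.one_le_sqrt.2 one_le_two)
    calc R ^ 3 ≤ (r * Real.sqrt (Real.log (1 / t))) ^ 3 := by gcongr
      _ = Real.log (1 / t) ^ (3 / 2 : ℝ) * r ^ 3 := by
        rw [mul_pow, Real.sqrt_eq_rpow, ← Real.rpow_natCast (_ ^ _), ← Real.rpow_mul hlog,
          mul_comm]
        norm_num
  calc _ ≤ volume (Metric.closedBall z R) * maxFn ρ z := enorm_setIntegral_ball_le_maxFn ρ z R
    _ = ENNReal.ofReal (R ^ 3) * volume (Metric.ball (0 : EuclideanSpace ℝ (Fin 3)) 1) *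
          maxFn ρ z := by
        rw [Measure.addHaar_closedBall volume z hR, finrank_euclideanSpace_fin]
    _ ≤ ENNReal.ofReal (Real.log (1 / t) ^ (3 / 2 : ℝ) * r ^ 3) *
          volume (Metric.ball (0 : EuclideanSpace ℝ (Fin 3)) 1) * maxFn ρ z := by
        gcongr
    _ = _ := by
        rw [ENNReal.ofReal_mul (by positivity)]
        ring

theorem ofReal_intervalIntegral_ball_sqrt_log_le (ρ : EuclideanSpace ℝ (Fin 3) → ℝ)
    (z : EuclideanSpace ℝ (Fin 3)) {r : ℝ} (hr : 0 < r) :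
    ENNReal.ofReal (∫ t in (0 : ℝ)..1,
        ∫ x in Metric.ball z (r * Real.sqrt (Real.log (1 / t)) / Real.sqrt 2), ρ x) ≤
      gaussianMaxConst * (ENNReal.ofReal (r ^ 3) * maxFn ρ z) := by
  rw [intervalIntegral.integral_of_le zero_le_one]
  refine (Real.ofReal_le_enorm _).trans <| (enorm_integral_le_lintegral_enorm _).trans ?_
  calc _ ≤ ∫⁻ t in Ioc 0 1, ENNReal.ofReal (Real.log (1 / t) ^ (3 / 2 : ℝ)) *
          (volume (Metric.ball (0 : EuclideanSpace ℝ (Fin 3)) 1) *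
            (ENNReal.ofReal (r ^ 3) * maxFn ρ z)) :=
        setLIntegral_mono' measurableSet_Ioc fun t ⟨ht0, ht1⟩ =>
          enorm_setIntegral_ball_sqrt_log_le ρ z hr ht0 ht1
    _ = gaussianMaxConst * (ENNReal.ofReal (r ^ 3) * maxFn ρ z) := by
        rw [lintegral_mul_const'' _ (by fun_prop), gaussianMaxConst]
        ring

/-- Layer-cake identity and maximal function bound for
`∑_k |α_k| ‖χ_{(r,z)} f_k‖²_{L²}`, where `χ_{(r,z)}(x) = exp(-|x-z|²/r²)`. -/
theorem stmt9 :
    ∃ C : ℝ, 0 < C ∧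
      ∀ (α : ℕ → ℝ), (Summable fun k => |α k|) →
      ∀ (f : ℕ → EuclideanSpace ℝ (Fin 3) → ℂ),
        (∀ k, MemLp (f k) 2 (volume : Measure (EuclideanSpace ℝ (Fin 3)))) →
        (∀ j k, ∫ x, conj (f j x) * f k x = if j = k then (1 : ℂ) else 0) →
      ∀ (ρ : EuclideanSpace ℝ (Fin 3) → ℝ), (∀ x, ρ x = ∑' k, |α k| * ‖f k x‖ ^ 2) →
      ∀ (r : ℝ), 0 < r → ∀ z : EuclideanSpace ℝ (Fin 3),
        (∑' k, |α k| * ∫ x, Real.exp (-‖x - z‖ ^ 2 / r ^ 2) ^ 2 * ‖f k x‖ ^ 2) =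
            (∫ t in (0 : ℝ)..1,
              ∫ x in Metric.ball z (r * Real.sqrt (Real.log (1 / t)) / Real.sqrt 2), ρ x) ∧
          ENNReal.ofReal
              (∑' k, |α k| * ∫ x, Real.exp (-‖x - z‖ ^ 2 / r ^ 2) ^ 2 * ‖f k x‖ ^ 2) ≤
            ENNReal.ofReal C * ENNReal.ofReal (r ^ 3) * maxFn ρ z := by
  refine ⟨gaussianMaxConst.toReal + 1, by positivity,
    fun α hα f hf horth ρ hρ r hr z => ?_⟩
  have hnorm : ∀ k, ∫ x, ‖f k x‖ ^ 2 = 1 := fun k => by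
    simpa [integral_conj_mul_self] using horth k k
  obtain rfl : ρ = fun x => ∑' k, |α k| * ‖f k x‖ ^ 2 := funext hρ
  have h_layer := tsum_mul_integral_exp_sq_eq_intervalIntegral (fun k => abs_nonneg (α k)) hα hf
    hnorm hr z
  refine ⟨h_layer, ?_⟩
  have hC : gaussianMaxConst ≤ ENNReal.ofReal (gaussianMaxConst.toReal + 1) :=
    (ENNReal.ofReal_toReal gaussianMaxConst_ne_top).symm.le.trans
      (ENNReal.ofReal_le_ofReal (le_add_of_nonneg_right zero_le_one))
  calc _ ≤ gaussianMaxConst * (ENNReal.ofReal (r ^ 3) * maxFn _ z) :=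
        h_layer ▸ ofReal_intervalIntegral_ball_sqrt_log_le _ z hr
    _ ≤ _ := by
        rw [mul_assoc (ENNReal.ofReal _)]
        gcongr
end
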